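/- (E(I))_{ij} = 1 if and only if the following three conditions all hold: (a) I_{ij} = 1; (b) there is no row i' with {i'}↑ strictly contained in {i}↑ such that I_{i'j} = 1; (c) there is no column j' with {j'}↓ strictly contained in {j}↓ such that I_{ij'} = 1. -/

import Mathlib

/-- `C↑`: attributes shared by all objects in `C`. -/
def up {n m : ℕ} (I : Fin n → Fin m → Bool) (C : Finset (Fin n)) : Finset (Fin m) :=
  Finset.univ.filter fun j => ∀ i ∈ C, I i j = true

/-- `D↓`: objects sharing all attributes in `D`. -/
def dn {n m : ℕ} (I : Fin n → Fin m → Bool) (D : Finset (Fin m)) : Finset (Fin n) :=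
  Finset.univ.filter fun i => ∀ j ∈ D, I i j = true

/-- A formal concept of `I`: a pair `⟨C,D⟩` with `C↑ = D` and `D↓ = C`. -/
def isConcept {n m : ℕ} (I : Fin n → Fin m → Bool)
    (p : Finset (Fin n) × Finset (Fin m)) : Prop :=
  up I p.1 = p.2 ∧ dn I p.2 = p.1

/-- The interval `[γ(C), μ(D)]` in the concept lattice of `I`
(concepts ordered by extent inclusion). -/
def interval {n m : ℕ} (I : Fin n → Fin m → Bool)
    (C : Finset (Fin n)) (D : Finset (Fin m)) :
    Set (Finset (Fin n) × Finset (Fin m)) :=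
  {p | isConcept I p ∧ dn I (up I C) ⊆ p.1 ∧ p.1 ⊆ dn I D}

/-- The Boolean matrix `A_F ∘ B_F` determined by a set `F` of concepts:
entry `(i,j)` is 1 iff some concept in `F` covers `(i,j)`. -/
def cov {n m : ℕ} (F : Finset (Finset (Fin n) × Finset (Fin m))) :
    Fin n → Fin m → Bool :=
  fun i j => decide (∃ p ∈ F, i ∈ p.1 ∧ j ∈ p.2)

/-- The essential part `E(I)`: entry `(i,j)` is 1 iff the interval `I_{ij}` is
non-empty and inclusion-minimal among the non-empty intervals `I_{i'j'}`. -/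
noncomputable def Ess {n m : ℕ} (I : Fin n → Fin m → Bool) : Fin n → Fin m → Bool :=
  fun i j =>
    @decide ((interval I {i} {j}).Nonempty ∧
      ∀ (i' : Fin n) (j' : Fin m), (interval I {i'} {j'}).Nonempty →
        interval I {i'} {j'} ⊆ interval I {i} {j} →
        interval I {i'} {j'} = interval I {i} {j})
      (Classical.propDecidable _)

/-! When non-empty, the interval `[γ(C), μ(D)]` contains its end points `γ(C) = (C↑↓, C↑)` and
`μ(D) = (D↓, D↓↑)`, so one non-empty interval lies inside another iff their end points compare:
`I_{i'j'} ⊆ I_{ij}` iff `{i'}↑ ⊆ {i}↑` and `{j'}↓ ⊆ {j}↓`. Such a pair with `I_{i'j'} = 1` forces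
`I_{i'j} = I_{ij'} = 1`, so a strictly smaller interval exists iff (b) or (c) fails. -/

section Concepts

variable {n m : ℕ} (I : Fin n → Fin m → Bool)

@[simp]
lemma mem_up {C : Finset (Fin n)} {j : Fin m} : j ∈ up I C ↔ ∀ i ∈ C, I i j = true := by
  simp [up]

@[simp]
lemma mem_dn {D : Finset (Fin m)} {i : Fin n} : i ∈ dn I D ↔ ∀ j ∈ D, I i j = true := by
  simp [dn]

lemma subset_up_iff_subset_dn {C : Finset (Fin n)} {D : Finset (Fin m)} :
    D ⊆ up I C ↔ C ⊆ dn I D := by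
  simp only [Finset.subset_iff, mem_up, mem_dn]
  exact forall₂_comm

lemma subset_dn_up (C : Finset (Fin n)) : C ⊆ dn I (up I C) :=
  (subset_up_iff_subset_dn I).mp subset_rfl

lemma subset_up_dn (D : Finset (Fin m)) : D ⊆ up I (dn I D) :=
  (subset_up_iff_subset_dn I).mpr subset_rfl

lemma up_anti {C C' : Finset (Fin n)} (h : C ⊆ C') : up I C' ⊆ up I C :=
  (subset_up_iff_subset_dn I).mpr (h.trans (subset_dn_up I C'))

lemma dn_anti {D D' : Finset (Fin m)} (h : D ⊆ D') : dn I D' ⊆ dn I D :=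
  (subset_up_iff_subset_dn I).mp (h.trans (subset_up_dn I D'))

lemma up_dn_up (C : Finset (Fin n)) : up I (dn I (up I C)) = up I C :=
  (up_anti I (subset_dn_up I C)).antisymm (subset_up_dn I (up I C))

lemma dn_up_dn (D : Finset (Fin m)) : dn I (up I (dn I D)) = dn I D :=
  (dn_anti I (subset_up_dn I D)).antisymm (subset_dn_up I (dn I D))

lemma singleton_subset_up_singleton {i : Fin n} {j : Fin m} :
    {j} ⊆ up I {i} ↔ I i j = true := by
  simp

variable {I}

lemma gamma_mem_interval {C : Finset (Fin n)} {D : Finset (Fin m)} (h : D ⊆ up I C) :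
    (dn I (up I C), up I C) ∈ interval I C D :=
  ⟨⟨up_dn_up I C, rfl⟩, subset_rfl, dn_anti I h⟩

lemma mu_mem_interval {C : Finset (Fin n)} {D : Finset (Fin m)} (h : D ⊆ up I C) :
    (dn I D, up I (dn I D)) ∈ interval I C D :=
  ⟨⟨rfl, dn_up_dn I D⟩, dn_anti I h, subset_rfl⟩

lemma interval_nonempty_iff {C : Finset (Fin n)} {D : Finset (Fin m)} :
    (interval I C D).Nonempty ↔ D ⊆ up I C := by
  refine ⟨fun ⟨_, _, hγ, hμ⟩ => ?_, fun h => ⟨_, gamma_mem_interval h⟩⟩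
  calc D ⊆ up I (dn I D) := subset_up_dn I D
    _ ⊆ up I (dn I (up I C)) := up_anti I (hγ.trans hμ)
    _ = up I C := up_dn_up I C

lemma interval_subset_interval_iff {C C' : Finset (Fin n)} {D D' : Finset (Fin m)}
    (h' : D' ⊆ up I C') :
    interval I C' D' ⊆ interval I C D ↔ up I C' ⊆ up I C ∧ dn I D' ⊆ dn I D := by
  refine ⟨fun hsub => ⟨?_, (hsub (mu_mem_interval h')).2.2⟩, ?_⟩
  · simpa only [up_dn_up] using up_anti I (hsub (gamma_mem_interval h')).2.1
  · rintro ⟨hup, hdn⟩ p ⟨hp, hγ, hμ⟩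
    exact ⟨hp, (dn_anti I hup).trans hγ, hμ.trans hdn⟩

lemma interval_eq_interval_iff {C C' : Finset (Fin n)} {D D' : Finset (Fin m)}
    (h : D ⊆ up I C) (h' : D' ⊆ up I C') :
    interval I C' D' = interval I C D ↔ up I C' = up I C ∧ dn I D' = dn I D := by
  rw [Set.Subset.antisymm_iff, interval_subset_interval_iff h', interval_subset_interval_iff h,
    Finset.Subset.antisymm_iff, Finset.Subset.antisymm_iff]
  tauto

lemma interval_singleton_minimal_iff {i : Fin n} {j : Fin m} (hij : I i j = true) :
    (∀ (i' : Fin n) (j' : Fin m), (interval I {i'} {j'}).Nonempty →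
        interval I {i'} {j'} ⊆ interval I {i} {j} → interval I {i'} {j'} = interval I {i} {j}) ↔
      ∀ (i' : Fin n) (j' : Fin m), I i' j' = true → up I {i'} ⊆ up I {i} →
        dn I {j'} ⊆ dn I {j} → up I {i'} = up I {i} ∧ dn I {j'} = dn I {j} := by
  refine forall₂_congr fun i' j' => ?_
  rw [interval_nonempty_iff, singleton_subset_up_singleton]
  refine imp_congr_right fun hi'j' => ?_
  have hji := (singleton_subset_up_singleton I).mpr hij
  have hj'i' := (singleton_subset_up_singleton I).mpr hi'j'
  rw [interval_subset_interval_iff hj'i', interval_eq_interval_iff hji hj'i', and_imp]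

end Concepts

lemma minimal_incidence_iff {n m : ℕ} {I : Fin n → Fin m → Bool} {i : Fin n} {j : Fin m} :
    (∀ (i' : Fin n) (j' : Fin m), I i' j' = true → up I {i'} ⊆ up I {i} →
        dn I {j'} ⊆ dn I {j} → up I {i'} = up I {i} ∧ dn I {j'} = dn I {j}) ↔
      (∀ i' : Fin n, up I {i'} ⊂ up I {i} → I i' j = false) ∧
       (∀ j' : Fin m, dn I {j'} ⊂ dn I {j} → I i j' = false) := by
  constructor
  · intro hmin
    refine ⟨fun i' hlt => ?_, fun j' hlt => ?_⟩
    · by_contra hi'j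
      exact hlt.ne (hmin i' j (by simpa using hi'j) hlt.subset subset_rfl).1
    · by_contra hij'
      exact hlt.ne (hmin i j' (by simpa using hij') subset_rfl hlt.subset).2
  · rintro ⟨hrow, hcol⟩ i' j' hi'j' hup hdn
    have hi'j : I i' j = true := by simpa using hdn (by simpa using hi'j')
    have hij' : I i j' = true := by simpa using hup (by simpa using hi'j')
    refine ⟨hup.eq_of_not_ssubset fun hlt => ?_, hdn.eq_of_not_ssubset fun hlt => ?_⟩
    · simp [hrow i' hlt] at hi'j
    · simp [hcol j' hlt] at hij'

theorem ess_computation {n m : ℕ} (I : Fin n → Fin m → Bool) (i : Fin n) (j : Fin m) :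
    Ess I i j = true ↔
      (I i j = true ∧
       (∀ i' : Fin n, up I {i'} ⊂ up I {i} → I i' j = false) ∧
       (∀ j' : Fin m, dn I {j'} ⊂ dn I {j} → I i j' = false)) := by
  rw [Ess, @decide_eq_true_iff _ (Classical.propDecidable _), interval_nonempty_iff,
    singleton_subset_up_singleton]
  exact and_congr_right fun hij =>
    (interval_singleton_minimal_iff hij).trans minimal_incidence_iff
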